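/- (Lemma 4.1) Let S ≥ 2 and N ≥ 2 be integers and let q = Σ_{k=1}^{N} Σ_{s=1}^{S} C(N,k)·ψ_s(S,k). Then N·S^{N−1} − q > 0. -/

import Mathlib

/-- Pair `(g S k, f S k)` defined by the recurrence:
`g(S,1)=1, f(S,1)=0`, and for `k ≥ 2`,
`g(S,k)=(S−1)·f(S,k−1)`, `f(S,k)=(S−2)·f(S,k−1)+g(S,k−1)`. -/
def gfAux (S : ℕ) : ℕ → ℤ × ℤ
  | 0 => (0, 0)
  | 1 => (1, 0)
  | (k+2) => (((S : ℤ) - 1) * (gfAux S (k+1)).2,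
              ((S : ℤ) - 2) * (gfAux S (k+1)).2 + (gfAux S (k+1)).1)

def g (S k : ℕ) : ℤ := (gfAux S k).1
def f (S k : ℕ) : ℤ := (gfAux S k).2

/-- `φ_s(S,k)`: `g(S,k)` if `s = 1`, else `f(S,k)`. -/
def phi (S s k : ℕ) : ℤ := if s = 1 then g S k else f S k

/-- `ψ_s(S,k) = ⌈(k(N−1)/N)·φ_s(S,k)⌉`. -/
def psi (S N s k : ℕ) : ℤ := ⌈((k : ℚ) * ((N : ℚ) - 1) / (N : ℚ)) * ((phi S s k : ℚ))⌉

/-- `q = Σ_{k=1}^{N} Σ_{s=1}^{S} C(N,k)·ψ_s(S,k)`. -/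
def qTotal (S N : ℕ) : ℤ :=
  ∑ k ∈ Finset.Icc 1 N, ∑ s ∈ Finset.Icc 1 S, (N.choose k : ℤ) * psi S N s k

/-! Since `⌈(1 - 1/N) a⌉ = a - ⌊a / N⌋` for `a : ℤ`, the quantity `N S^(N-1) - q` equals
`N S^(N-1) - Σ_k C(N,k) k Σ_s φ_s(S,k) + Σ_k Σ_s C(N,k) ⌊k φ_s(S,k) / N⌋`. The recurrence
gives `Σ_s φ_s(S,k) = g(S,k) + (S-1) f(S,k) = (S-1)^(k-1)`, so the middle sum is the
differentiated binomial theorem `Σ_k C(N,k) k x^(k-1) = N (x+1)^(N-1)` at `x = S - 1`, and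
cancels `N S^(N-1)`. What remains is a sum of nonnegative floors whose `k = N` term is
`(S-1)^(N-1) > 0`. -/

open Finset

theorem sum_Icc_choose_mul_mul_pow_sub_one {R : Type*} [CommSemiring R] (n : ℕ) (x : R) :
    ∑ k ∈ Icc 1 n, (n.choose k : R) * k * x ^ (k - 1) = n * (x + 1) ^ (n - 1) := by
  cases n with
  | zero => simp
  | succ n =>
    rw [← Ico_add_one_right_eq_Icc, sum_Ico_eq_sum_range, add_pow, mul_sum, Nat.add_sub_cancel]
    refine sum_congr rfl fun k _ => ?_
    have := Nat.add_one_mul_choose_eq n k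
    rw [add_comm 1 k, Nat.add_sub_cancel, one_pow, mul_one]
    calc ((n + 1).choose (k + 1) : R) * ↑(k + 1) * x ^ k
        = ((n + 1).choose (k + 1) * (k + 1) : ℕ) * x ^ k := by push_cast; ring
      _ = ((n + 1 : ℕ) : R) * (x ^ k * n.choose k) := by rw [← this]; push_cast; ring

theorem Rat.ceil_intCast_mul_sub_one_div (a : ℤ) {n : ℕ} (hn : n ≠ 0) :
    ⌈(a : ℚ) * ((n : ℚ) - 1) / n⌉ = a - a / n := by
  have : (a : ℚ) * ((n : ℚ) - 1) / n = -((a : ℚ) / n) + a := by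
    field_simp
    ring
  rw [this, Int.ceil_add_intCast, Int.ceil_neg, Rat.floor_intCast_div_natCast]
  ring

section Recurrence

variable {S : ℕ}

theorem g_add_mul_f (S k : ℕ) :
    g S (k + 1) + ((S : ℤ) - 1) * f S (k + 1) = ((S : ℤ) - 1) ^ k := by
  induction k with
  | zero => simp [g, f, gfAux]
  | succ k ih =>
    simp only [g, f, gfAux] at ih ⊢
    rw [pow_succ, ← ih]
    ring

theorem g_nonneg_and_f_nonneg (hS : 2 ≤ S) (k : ℕ) : 0 ≤ g S k ∧ 0 ≤ f S k := by
  have hS' : (2 : ℤ) ≤ S := by exact_mod_cast hS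
  induction k using Nat.strong_induction_on with
  | _ k ih =>
    match k, ih with
    | 0, _ => simp [g, f, gfAux]
    | 1, _ => simp [g, f, gfAux]
    | k + 2, ih =>
      obtain ⟨hg, hf⟩ := ih (k + 1) (by omega)
      simp only [g, f, gfAux] at hg hf ⊢
      constructor <;> nlinarith

theorem phi_nonneg (hS : 2 ≤ S) (s k : ℕ) : 0 ≤ phi S s k := by
  obtain ⟨hg, hf⟩ := g_nonneg_and_f_nonneg hS k
  unfold phi
  split_ifs <;> assumption

theorem sum_phi (hS : 1 ≤ S) (k : ℕ) :
    ∑ s ∈ Icc 1 S, phi S s (k + 1) = ((S : ℤ) - 1) ^ k := by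
  have phi_of_ne_one : ∀ s ∈ Icc (1 + 1) S, phi S s (k + 1) = f S (k + 1) :=
    fun s hs => if_neg (by simp at hs; omega)
  rw [← insert_Icc_add_one_left_eq_Icc hS, sum_insert (by simp), sum_congr rfl phi_of_ne_one,
    sum_const, Nat.card_Icc, Nat.add_sub_add_right, nsmul_eq_mul, Nat.cast_sub hS,
    ← g_add_mul_f]
  simp [phi]

theorem sum_choose_mul_sum_phi (hS : 1 ≤ S) (N : ℕ) :
    ∑ k ∈ Icc 1 N, ∑ s ∈ Icc 1 S, (N.choose k : ℤ) * (k * phi S s k)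
      = N * (S : ℤ) ^ (N - 1) := by
  have inner : ∀ k ∈ Icc 1 N, ∑ s ∈ Icc 1 S, (N.choose k : ℤ) * (k * phi S s k)
      = N.choose k * k * ((S : ℤ) - 1) ^ (k - 1) := by
    intro k hk
    obtain ⟨j, rfl⟩ : ∃ j, k = j + 1 := ⟨k - 1, by simp at hk; omega⟩
    rw [← mul_sum, ← mul_sum, sum_phi hS, Nat.add_sub_cancel, mul_assoc]
  rw [sum_congr rfl inner, sum_Icc_choose_mul_mul_pow_sub_one, sub_add_cancel]

end Recurrence

theorem psi_eq (S s k : ℕ) {N : ℕ} (hN : N ≠ 0) :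
    psi S N s k = k * phi S s k - k * phi S s k / N := by
  rw [psi, ← Rat.ceil_intCast_mul_sub_one_div _ hN]
  push_cast
  ring_nf

theorem sub_qTotal_eq {S N : ℕ} (hS : 1 ≤ S) (hN : N ≠ 0) :
    N * (S : ℤ) ^ (N - 1) - qTotal S N
      = ∑ k ∈ Icc 1 N, ∑ s ∈ Icc 1 S, (N.choose k : ℤ) * (k * phi S s k / N) := by
  rw [← sum_choose_mul_sum_phi hS, qTotal, ← sum_sub_distrib]
  refine sum_congr rfl fun k _ => ?_
  rw [← sum_sub_distrib]
  refine sum_congr rfl fun s _ => ?_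
  rw [psi_eq S s k hN]
  ring

theorem lemma4_1 (S N : ℕ) (hS : 2 ≤ S) (hN : 2 ≤ N) :
    0 < (N : ℤ) * (S : ℤ) ^ (N - 1) - qTotal S N := by
  have terms_nonneg :
      ∀ k ∈ Icc 1 N, 0 ≤ ∑ s ∈ Icc 1 S, (N.choose k : ℤ) * (k * phi S s k / N) :=
    fun k _ => sum_nonneg fun s _ => mul_nonneg (by positivity)
      (Int.ediv_nonneg (mul_nonneg (by positivity) (phi_nonneg hS s k)) (by positivity))
  have top_term :
      ∑ s ∈ Icc 1 S, (N.choose N : ℤ) * (N * phi S s N / N) = ((S : ℤ) - 1) ^ (N - 1) := by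
    obtain ⟨M, rfl⟩ : ∃ M, N = M + 1 := ⟨N - 1, by omega⟩
    simp only [Nat.choose_self, Nat.cast_one, one_mul,
      Int.mul_ediv_cancel_left _ (by positivity : ((M + 1 : ℕ) : ℤ) ≠ 0)]
    exact sum_phi (by omega) M
  rw [sub_qTotal_eq (by omega) (by omega)]
  calc (0 : ℤ) < ((S : ℤ) - 1) ^ (N - 1) := pow_pos (by omega) _
    _ = _ := top_term.symm
    _ ≤ _ := single_le_sum terms_nonneg (by simp; omega)
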